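/- Let M be symmetric positive definite, D = diag(M), and D̂ a positive diagonal matrix with D̂ = diag(M̂) for a symmetric positive definite M̂. Define 𝓜 = D^{1/2} D̂^{-1/2} M̂ D̂^{-1/2} D^{1/2}. Then λ_min(𝓜) ≥ λ_min(M) λ_min(M̂)/λ_max(M̂) and λ_max(𝓜) ≤ λ_max(M) λ_max(M̂)/λ_min(M̂). -/

import Mathlib

/-!
Write `a, A` and `b, B` for the extreme eigenvalues of `M` and `M̂`, so that `a • 1 ≤ M ≤ A • 1`
and `b • 1 ≤ M̂ ≤ B • 1` in the Loewner order. Testing these at basis vectors bounds the diagonal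
entries, hence `a / B ≤ d i ^ 2 ≤ A / b` for `d i = √(M i i) / √(M̂ i i)`. Now `𝓜 = S M̂ Sᴴ` with
`S = diagonal d`, and congruence preserves the Loewner order, so
`b (a / B) • 1 ≤ b • S Sᴴ ≤ 𝓜 ≤ B • S Sᴴ ≤ B (A / b) • 1`.
-/

open Matrix

namespace Matrix

variable {n : Type*} [DecidableEq n]

lemma PosSemidef.le_diag_of_sub_smul_one {A : Matrix n n ℝ} {c : ℝ} (h : (A - c • 1).PosSemidef)
    (i : n) : c ≤ A i i := by
  simpa using h.diag_nonneg (i := i)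

lemma PosSemidef.diag_le_of_smul_one_sub {A : Matrix n n ℝ} {c : ℝ} (h : (c • 1 - A).PosSemidef)
    (i : n) : A i i ≤ c := by
  simpa using h.diag_nonneg (i := i)

variable [Fintype n]

lemma IsHermitian.forall_le_mem_spectrum_iff {A : Matrix n n ℝ} (hA : A.IsHermitian) (c : ℝ) :
    (∀ μ ∈ spectrum ℝ A, c ≤ μ) ↔ (A - c • 1).PosSemidef := by
  rw [posSemidef_iff_isHermitian_and_spectrum_nonneg, ← Algebra.algebraMap_eq_smul_one,
    ← spectrum.sub_singleton_eq, Set.sub_singleton,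
    algebraMap_eq_diagonal, and_iff_right (hA.sub (isHermitian_diagonal _))]
  simp [Set.subset_def]

lemma IsHermitian.forall_mem_spectrum_le_iff {A : Matrix n n ℝ} (hA : A.IsHermitian) (c : ℝ) :
    (∀ μ ∈ spectrum ℝ A, μ ≤ c) ↔ (c • 1 - A).PosSemidef := by
  rw [show c • 1 - A = -A - (-c) • 1 by rw [neg_smul, sub_neg_eq_add, neg_add_eq_sub],
    ← hA.neg.forall_le_mem_spectrum_iff, ← spectrum.neg_eq]
  simp

lemma IsHermitian.spectrum_nonempty [Nonempty n] {A : Matrix n n ℝ} (hA : A.IsHermitian) :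
    (spectrum ℝ A).Nonempty :=
  hA.spectrum_real_eq_range_eigenvalues ▸ Set.range_nonempty _

lemma IsHermitian.le_sInf_spectrum_iff [Nonempty n] {A : Matrix n n ℝ} (hA : A.IsHermitian)
    (c : ℝ) : c ≤ sInf (spectrum ℝ A) ↔ (A - c • 1).PosSemidef := by
  rw [← hA.forall_le_mem_spectrum_iff,
    le_csInf_iff A.finite_real_spectrum.bddBelow hA.spectrum_nonempty]

lemma IsHermitian.sSup_spectrum_le_iff [Nonempty n] {A : Matrix n n ℝ} (hA : A.IsHermitian)
    (c : ℝ) : sSup (spectrum ℝ A) ≤ c ↔ (c • 1 - A).PosSemidef := by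
  rw [← hA.forall_mem_spectrum_le_iff,
    csSup_le_iff A.finite_real_spectrum.bddAbove hA.spectrum_nonempty]

lemma PosDef.sInf_spectrum_pos [Nonempty n] {A : Matrix n n ℝ} (hA : A.PosDef) :
    0 < sInf (spectrum ℝ A) := by
  obtain ⟨i, hi⟩ : sInf (spectrum ℝ A) ∈ Set.range hA.1.eigenvalues :=
    hA.1.spectrum_real_eq_range_eigenvalues ▸
      hA.1.spectrum_nonempty.csInf_mem A.finite_real_spectrum
  rw [← hi]
  exact hA.eigenvalues_pos i

lemma PosDef.sSup_spectrum_pos [Nonempty n] {A : Matrix n n ℝ} (hA : A.PosDef) :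
    0 < sSup (spectrum ℝ A) :=
  hA.sInf_spectrum_pos.trans_le <| csInf_le_csSup hA.1.spectrum_nonempty
    A.finite_real_spectrum.bddBelow A.finite_real_spectrum.bddAbove

lemma PosSemidef.sub_smul_one_mul_mul_conjTranspose {B S : Matrix n n ℝ} {b l : ℝ} (hb : 0 ≤ b)
    (hB : (B - b • 1).PosSemidef) (hS : (S * Sᴴ - l • 1).PosSemidef) :
    (S * B * Sᴴ - (b * l) • 1).PosSemidef := by
  have h : S * B * Sᴴ - (b * l) • 1 = S * (B - b • 1) * Sᴴ + b • (S * Sᴴ - l • 1) := by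
    simp only [mul_sub, sub_mul, mul_smul_comm, smul_mul_assoc, mul_one, smul_sub, smul_smul]
    abel
  rw [h]
  exact (hB.mul_mul_conjTranspose_same S).add (hS.smul hb)

lemma PosSemidef.smul_one_sub_mul_mul_conjTranspose {B S : Matrix n n ℝ} {c u : ℝ} (hc : 0 ≤ c)
    (hB : (c • 1 - B).PosSemidef) (hS : (u • 1 - S * Sᴴ).PosSemidef) :
    ((c * u) • 1 - S * B * Sᴴ).PosSemidef := by
  have h : (c * u) • 1 - S * B * Sᴴ = S * (c • 1 - B) * Sᴴ + c • (u • 1 - S * Sᴴ) := by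
    simp only [mul_sub, sub_mul, mul_smul_comm, smul_mul_assoc, mul_one, smul_sub, smul_smul]
    abel
  rw [h]
  exact (hB.mul_mul_conjTranspose_same S).add (hS.smul hc)

lemma diagonal_mul_conjTranspose_sub_smul_one {d : n → ℝ} {l : ℝ} (h : ∀ i, l ≤ d i ^ 2) :
    (diagonal d * (diagonal d)ᴴ - l • 1).PosSemidef := by
  rw [diagonal_conjTranspose, diagonal_mul_diagonal, smul_one_eq_diagonal, diagonal_sub,
    posSemidef_diagonal_iff]
  intro i
  simpa [← sq] using h i

lemma smul_one_sub_diagonal_mul_conjTranspose {d : n → ℝ} {u : ℝ} (h : ∀ i, d i ^ 2 ≤ u) :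
    (u • 1 - diagonal d * (diagonal d)ᴴ).PosSemidef := by
  rw [diagonal_conjTranspose, diagonal_mul_diagonal, smul_one_eq_diagonal, diagonal_sub,
    posSemidef_diagonal_iff]
  intro i
  simpa [← sq] using h i

end Matrix

/-- For the preconditioner `𝓜 = D^{1/2} D̂^{-1/2} M̂ D̂^{-1/2} D^{1/2}` (with `D = diag M`,
`D̂ = diag M̂`, both SPD), `λ_min(𝓜) ≥ λ_min(M) λ_min(M̂)/λ_max(M̂)` and
`λ_max(𝓜) ≤ λ_max(M) λ_max(M̂)/λ_min(M̂)`. -/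
theorem preconditioner_eigenvalue_bounds {N : ℕ}
    (M Mh : Matrix (Fin N) (Fin N) ℝ) (hM : M.PosDef) (hMh : Mh.PosDef) :
    let Dsqrt : Matrix (Fin N) (Fin N) ℝ := Matrix.diagonal fun i => Real.sqrt (M i i)
    let DhInvSqrt : Matrix (Fin N) (Fin N) ℝ :=
      Matrix.diagonal fun i => (Real.sqrt (Mh i i))⁻¹
    let 𝓜 := Dsqrt * DhInvSqrt * Mh * DhInvSqrt * Dsqrt
    sInf (spectrum ℝ M) * sInf (spectrum ℝ Mh) / sSup (spectrum ℝ Mh) ≤ sInf (spectrum ℝ 𝓜) ∧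
    sSup (spectrum ℝ 𝓜) ≤ sSup (spectrum ℝ M) * sSup (spectrum ℝ Mh) / sInf (spectrum ℝ Mh) := by
  intro Dsqrt DhInvSqrt 𝓜
  cases isEmpty_or_nonempty (Fin N)
  · simp [spectrum.of_subsingleton]
  set d : Fin N → ℝ := fun i => √(M i i) * (√(Mh i i))⁻¹
  have h𝓜 : 𝓜 = diagonal d * Mh * (diagonal d)ᴴ := by
    simp only [𝓜, Dsqrt, DhInvSqrt, d, diagonal_conjTranspose, star_trivial, mul_assoc,
      diagonal_mul_diagonal]
    simp_rw [mul_comm (√(Mh _ _))⁻¹]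
  have h𝓜H : 𝓜.IsHermitian := h𝓜 ▸ isHermitian_mul_mul_conjTranspose _ hMh.1
  have hd : ∀ i, d i ^ 2 = M i i / Mh i i := fun i => by
    rw [mul_pow, inv_pow, Real.sq_sqrt hM.diag_pos.le, Real.sq_sqrt hMh.diag_pos.le,
      div_eq_mul_inv]
  have hM_lo := (hM.1.le_sInf_spectrum_iff _).mp le_rfl
  have hM_hi := (hM.1.sSup_spectrum_le_iff _).mp le_rfl
  have hMh_lo := (hMh.1.le_sInf_spectrum_iff _).mp le_rfl
  have hMh_hi := (hMh.1.sSup_spectrum_le_iff _).mp le_rfl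
  constructor
  · rw [h𝓜H.le_sInf_spectrum_iff, h𝓜, mul_comm (sInf _), mul_div_assoc]
    refine hMh_lo.sub_smul_one_mul_mul_conjTranspose hMh.sInf_spectrum_pos.le
      (diagonal_mul_conjTranspose_sub_smul_one fun i => hd i ▸ ?_)
    exact div_le_div₀ hM.diag_pos.le (hM_lo.le_diag_of_sub_smul_one i) hMh.diag_pos
      (hMh_hi.diag_le_of_smul_one_sub i)
  · rw [h𝓜H.sSup_spectrum_le_iff, h𝓜, mul_comm (sSup (spectrum ℝ M)), mul_div_assoc]
    refine hMh_hi.smul_one_sub_mul_mul_conjTranspose hMh.sSup_spectrum_pos.le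
      (smul_one_sub_diagonal_mul_conjTranspose fun i => hd i ▸ ?_)
    exact div_le_div₀ hM.sSup_spectrum_pos.le (hM_hi.diag_le_of_smul_one_sub i)
      hMh.sInf_spectrum_pos (hMh_lo.le_diag_of_sub_smul_one i)
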